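/- (Halting I.) Let Φ be an m×d real matrix with restricted isometry constant δ_{2s} ≤ 0.1. Let x, a ∈ ℝ^d be s-sparse vectors, let e ∈ ℝ^m, set r = x − a, v = Φr + e, and y = Φ*v. Then: (i) if ‖v‖₂ ≤ ε then ‖x − a‖₂ ≤ 1.06 (ε + ‖e‖₂); (ii) if ‖y‖_∞ ≤ η/√(2s) then ‖x − a‖_∞ ≤ 1.12 η + 1.17 ‖e‖₂. -/

import Mathlib

/-- The Euclidean (ℓ2) norm of a finitely-indexed real vector. -/
noncomputable def l2 {ι : Type*} [Fintype ι] (v : ι → ℝ) : ℝ :=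
  Real.sqrt (∑ i, (v i) ^ 2)

/-- The supremum (ℓ∞) norm of a finitely-indexed real vector. -/
noncomputable def linf {ι : Type*} [Fintype ι] (v : ι → ℝ) : ℝ :=
  ⨆ i, |v i|

/-- A vector is `s`-sparse if it has at most `s` nonzero coordinates. -/
def Sparse {d : ℕ} (s : ℕ) (v : Fin d → ℝ) : Prop :=
  {i | v i ≠ 0}.ncard ≤ s

/-- `δ` satisfies the restricted isometry inequalities of `Φ` at sparsity level `r`
(quadratic form); `δ_r ≤ δ` is equivalent to this (for `δ ≥ 0`). -/
def RICq {m d : ℕ} (Φ : Matrix (Fin m) (Fin d) ℝ) (r : ℕ) (δ : ℝ) : Prop :=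
  ∀ v : Fin d → ℝ, Sparse r v →
    (1 - δ) * (l2 v) ^ 2 ≤ (l2 (Φ.mulVec v)) ^ 2 ∧
      (l2 (Φ.mulVec v)) ^ 2 ≤ (1 + δ) * (l2 v) ^ 2

/-! Write `r = x − a`, which is `2s`-sparse, and `w = Φr`. The lower RIP bound gives
`√0.9 ‖r‖₂ ≤ ‖w‖₂ ≤ ‖v‖₂ + ‖e‖₂`, which is (i). For (ii), `⟨y, r⟩ = ‖w‖₂² + ⟨e, w⟩`, while
`⟨y, r⟩ ≤ ‖y‖_∞ ‖r‖₁ ≤ √(2s) ‖y‖_∞ ‖r‖₂ ≤ η ‖r‖₂`; combined with `0.9 ‖r‖₂² ≤ ‖w‖₂²` and the upper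
bound `‖w‖₂ ≤ √1.1 ‖r‖₂` this yields `0.9 ‖r‖₂ ≤ η + √1.1 ‖e‖₂`, and `‖r‖_∞ ≤ ‖r‖₂`. -/

open Matrix

section Norms

variable {ι : Type*} [Fintype ι]

lemma l2_eq_norm (v : ι → ℝ) : l2 v = ‖(WithLp.toLp 2 v : EuclideanSpace ℝ ι)‖ := by
  simp [l2, EuclideanSpace.norm_eq]

lemma l2_nonneg (v : ι → ℝ) : 0 ≤ l2 v := Real.sqrt_nonneg _

lemma l2_sq (v : ι → ℝ) : l2 v ^ 2 = v ⬝ᵥ v := by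
  rw [l2, Real.sq_sqrt (by positivity), dotProduct]
  simp only [sq]

lemma l2_add_le (u v : ι → ℝ) : l2 (u + v) ≤ l2 u + l2 v := by
  simpa only [l2_eq_norm, WithLp.toLp_add] using norm_add_le _ _

lemma l2_neg (v : ι → ℝ) : l2 (-v) = l2 v := by
  simp only [l2_eq_norm, WithLp.toLp_neg, norm_neg]

lemma abs_dotProduct_le_l2_mul_l2 (u v : ι → ℝ) : |u ⬝ᵥ v| ≤ l2 u * l2 v := by
  have h := abs_real_inner_le_norm (WithLp.toLp 2 v : EuclideanSpace ℝ ι) (WithLp.toLp 2 u)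
  rwa [EuclideanSpace.inner_eq_star_dotProduct, star_trivial, mul_comm, ← l2_eq_norm,
    ← l2_eq_norm] at h

lemma abs_le_l2 (v : ι → ℝ) (i : ι) : |v i| ≤ l2 v := by
  simpa only [l2_eq_norm, Real.norm_eq_abs] using
    PiLp.norm_apply_le (WithLp.toLp 2 v : EuclideanSpace ℝ ι) i

lemma linf_nonneg (v : ι → ℝ) : 0 ≤ linf v :=
  Real.iSup_nonneg fun _ => abs_nonneg _

lemma abs_le_linf (v : ι → ℝ) (i : ι) : |v i| ≤ linf v :=
  le_ciSup (f := fun j => |v j|) (Set.finite_range _).bddAbove i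

lemma linf_le_l2 (v : ι → ℝ) : linf v ≤ l2 v :=
  Real.iSup_le (abs_le_l2 v) (l2_nonneg v)

lemma dotProduct_le_linf_mul_l1 (u v : ι → ℝ) : u ⬝ᵥ v ≤ linf u * ∑ i, |v i| := by
  rw [Finset.mul_sum]
  refine Finset.sum_le_sum fun i _ => ?_
  calc u i * v i ≤ |u i| * |v i| := by rw [← abs_mul]; exact le_abs_self _
    _ ≤ linf u * |v i| := by gcongr; exact abs_le_linf u i

end Norms

section Sparse

variable {d : ℕ}

lemma Sparse.sub {s t : ℕ} {x a : Fin d → ℝ} (hx : Sparse s x) (ha : Sparse t a) :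
    Sparse (s + t) (x - a) := by
  have hsub : {i | (x - a) i ≠ 0} ⊆ {i | x i ≠ 0} ∪ {i | a i ≠ 0} := by
    intro i hi
    by_contra h
    simp_all
  calc {i | (x - a) i ≠ 0}.ncard ≤ ({i | x i ≠ 0} ∪ {i | a i ≠ 0}).ncard :=
        Set.ncard_le_ncard hsub
    _ ≤ _ := Set.ncard_union_le _ _
    _ ≤ s + t := add_le_add hx ha

lemma Sparse.l1_le_sqrt_mul_l2 {k : ℕ} {v : Fin d → ℝ} (hv : Sparse k v) :
    ∑ i, |v i| ≤ √k * l2 v := by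
  classical
  set T := Finset.univ.filter fun i => v i ≠ 0
  have hT : T.card ≤ k := by
    rwa [← Set.ncard_coe_finset, Finset.coe_filter_univ]
  have hsum : ∑ i, |v i| = ∑ i ∈ T, |v i| :=
    (Finset.sum_filter_of_ne fun i _ hi => by simpa using hi).symm
  have hsq : (∑ i, |v i|) ^ 2 ≤ (√k * l2 v) ^ 2 := by
    rw [mul_pow, Real.sq_sqrt k.cast_nonneg, l2_sq, hsum]
    calc (∑ i ∈ T, |v i|) ^ 2 ≤ T.card * ∑ i ∈ T, |v i| ^ 2 := sq_sum_le_card_mul_sum_sq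
      _ ≤ k * ∑ i, v i * v i := by
        gcongr
        simp only [sq_abs, ← sq]
        exact Finset.sum_le_sum_of_subset_of_nonneg T.subset_univ fun i _ _ => sq_nonneg _
  exact le_of_pow_le_pow_left₀ two_ne_zero (mul_nonneg (Real.sqrt_nonneg _) (l2_nonneg v)) hsq

lemma dotProduct_le_sqrt_mul_linf_mul_l2 {k : ℕ} (u : Fin d → ℝ) {v : Fin d → ℝ}
    (hv : Sparse k v) : u ⬝ᵥ v ≤ √k * linf u * l2 v :=
  calc u ⬝ᵥ v ≤ linf u * ∑ i, |v i| := dotProduct_le_linf_mul_l1 u v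
    _ ≤ linf u * (√k * l2 v) := by gcongr; exacts [linf_nonneg u, hv.l1_le_sqrt_mul_l2]
    _ = √k * linf u * l2 v := by ring

end Sparse

section RestrictedIsometry

variable {m d k : ℕ} {Φ : Matrix (Fin m) (Fin d) ℝ} {δ : ℝ} {r : Fin d → ℝ}

lemma RICq.sqrt_mul_l2_le (hΦ : RICq Φ k δ) (hr : Sparse k r) :
    √(1 - δ) * l2 r ≤ l2 (Φ *ᵥ r) := by
  rw [← Real.sqrt_sq (l2_nonneg r), ← Real.sqrt_mul' _ (sq_nonneg _)]
  exact Real.sqrt_le_left (l2_nonneg _) |>.mpr (hΦ r hr).1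

lemma RICq.l2_le_sqrt_mul (hΦ : RICq Φ k δ) (hr : Sparse k r) :
    l2 (Φ *ᵥ r) ≤ √(1 + δ) * l2 r := by
  rw [← Real.sqrt_sq (l2_nonneg r), ← Real.sqrt_mul' _ (sq_nonneg _),
    ← Real.sqrt_sq (l2_nonneg (Φ *ᵥ r))]
  exact Real.sqrt_le_sqrt (hΦ r hr).2

lemma RICq.sqrt_mul_l2_le_l2_add (hΦ : RICq Φ k δ) (hr : Sparse k r) (e : Fin m → ℝ) :
    √(1 - δ) * l2 r ≤ l2 (Φ *ᵥ r + e) + l2 e :=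
  calc √(1 - δ) * l2 r ≤ l2 (Φ *ᵥ r) := hΦ.sqrt_mul_l2_le hr
    _ = l2 ((Φ *ᵥ r + e) + -e) := by rw [add_neg_cancel_right]
    _ ≤ l2 (Φ *ᵥ r + e) + l2 e := by rw [← l2_neg e]; exact l2_add_le _ _

lemma RICq.mul_l2_le_linf_transpose (hΦ : RICq Φ k δ) (hr : Sparse k r) (e : Fin m → ℝ) :
    (1 - δ) * l2 r ≤ √k * linf (Φᵀ *ᵥ (Φ *ᵥ r + e)) + √(1 + δ) * l2 e := by
  set w := Φ *ᵥ r
  set y := Φᵀ *ᵥ (w + e)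
  -- `⟨Φᵀ(w + e), r⟩ = ⟨w + e, Φr⟩`
  have hid : y ⬝ᵥ r = l2 w ^ 2 + e ⬝ᵥ w := by
    rw [l2_sq, show y = (w + e) ᵥ* Φ from mulVec_transpose Φ _, ← dotProduct_mulVec,
      add_dotProduct]
  have hyr := dotProduct_le_sqrt_mul_linf_mul_l2 y hr
  have hew : -(l2 e * l2 w) ≤ e ⬝ᵥ w := (abs_le.mp (abs_dotProduct_le_l2_mul_l2 e w)).1
  have hwe : l2 e * l2 w ≤ l2 e * (√(1 + δ) * l2 r) :=
    mul_le_mul_of_nonneg_left (hΦ.l2_le_sqrt_mul hr) (l2_nonneg e)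
  have hsq : (1 - δ) * l2 r * l2 r ≤ (√k * linf y + √(1 + δ) * l2 e) * l2 r := by
    nlinarith [(hΦ r hr).1]
  rcases (l2_nonneg r).eq_or_lt with h0 | hpos
  · rw [← h0, mul_zero]
    exact add_nonneg (mul_nonneg (Real.sqrt_nonneg _) (linf_nonneg y))
      (mul_nonneg (Real.sqrt_nonneg _) (l2_nonneg e))
  · exact le_of_mul_le_mul_right hsq hpos

end RestrictedIsometry

/-- **Halting I.** Suppose `δ_{2s} ≤ 0.1`. For `s`-sparse `x, a`, with
`r = x − a`, `v = Φr + e` and `y = Φ*v`: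
(i) if `‖v‖₂ ≤ ε` then `‖x − a‖₂ ≤ 1.06 (ε + ‖e‖₂)`;
(ii) if `‖y‖_∞ ≤ η/√(2s)` then `‖x − a‖_∞ ≤ 1.12 η + 1.17 ‖e‖₂`. -/
theorem stmt13 (m d s : ℕ) (hs : 0 < s)
    (Φ : Matrix (Fin m) (Fin d) ℝ) (hΦ : RICq Φ (2 * s) (1 / 10))
    (x a : Fin d → ℝ) (hx : Sparse s x) (ha : Sparse s a) (e : Fin m → ℝ)
    (ε η : ℝ) :
    (l2 (Φ.mulVec (x - a) + e) ≤ ε → l2 (x - a) ≤ 1.06 * (ε + l2 e)) ∧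
    (linf (Φ.transpose.mulVec (Φ.mulVec (x - a) + e)) ≤ η / Real.sqrt (2 * (s : ℝ)) →
      linf (x - a) ≤ 1.12 * η + 1.17 * l2 e) := by
  have hr : Sparse (2 * s) (x - a) := two_mul s ▸ hx.sub ha
  have hr0 := l2_nonneg (x - a)
  have he0 := l2_nonneg e
  refine ⟨fun hv => ?_, fun hy => ?_⟩
  · have hsqrt : (0.948 : ℝ) ≤ √(1 - 1 / 10) :=
      (Real.le_sqrt (by norm_num) (by norm_num)).mpr (by norm_num)
    have hlow := hΦ.sqrt_mul_l2_le_l2_add hr e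
    nlinarith
  · have hsqrt : (0 : ℝ) < √(2 * s) := Real.sqrt_pos.mpr (by positivity)
    have hη : √(2 * s) * linf (Φᵀ *ᵥ (Φ *ᵥ (x - a) + e)) ≤ η := (le_div_iff₀' hsqrt).mp hy
    have hη0 : 0 ≤ η := (mul_nonneg hsqrt.le (linf_nonneg _)).trans hη
    have hup : √(1 + 1 / 10) ≤ (1.049 : ℝ) := (Real.sqrt_le_left (by norm_num)).mpr (by norm_num)
    have hbound : (1 - 1 / 10) * l2 (x - a) ≤ η + 1.049 * l2 e := by
      have key := hΦ.mul_l2_le_linf_transpose hr e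
      push_cast at key
      nlinarith
    linarith [linf_le_l2 (x - a)]
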